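/- Let 𝕏 ⊆ ℝ^{n_x} be a convex set, let Φ : ℝ^{n_x} → ℝ^{n_f} be continuously differentiable with Jacobian ∂Φ/∂x, let f : ℝ^{n_x} → ℝ^{n_x} and b ∈ ℝ^{n_x × n_u} be such that f(x) ∈ 𝕏 and f(x) + bu ∈ 𝕏 for all x ∈ 𝕏, u ∈ 𝕌, and suppose there is A ∈ ℝ^{n_f × n_f} with Φ(f(x)) = A Φ(x) for all x ∈ 𝕏. Then for every x ∈ 𝕏 and u ∈ 𝕌, the discrete-time system with linear input x_{k+1} = f(x_k) + b u_k has the exact factorized lifted form Φ(f(x) + bu) = A Φ(x) + B(x,u)·u, where B(x,u) = (∫₀¹ (∂Φ/∂x)(f(x) + λ b u) dλ)·b. -/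

import Mathlib

/-! Koopman invariance turns `Φ (f x)` into `A Φ(x)`. The remaining increment
`Φ (f x + b u) - Φ (f x)` is the fundamental theorem of calculus along the segment
`s ↦ f x + s • b u`, and the constant vector `b u` can be pulled out of the entrywise
integral of the Jacobian, which leaves `B(x,u) u`. -/

open Matrix MeasureTheory

theorem sub_eq_intervalIntegral_fderiv_add_smul {E F : Type*}
    [NormedAddCommGroup E] [NormedSpace ℝ E] [NormedAddCommGroup F] [NormedSpace ℝ F]
    [CompleteSpace F] {Φ : E → F} {Φ' : E → E →L[ℝ] F}
    (hΦ : ∀ z, HasFDerivAt Φ (Φ' z) z) (hΦ' : Continuous Φ') (y v : E) :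
    Φ (y + v) - Φ y = ∫ s in (0:ℝ)..1, Φ' (y + s • v) v := by
  have hline : ∀ s : ℝ, HasDerivAt (fun t : ℝ => y + t • v) v s := fun s => by
    simpa using ((hasDerivAt_id s).smul_const v).const_add y
  have hint : IntervalIntegrable (fun s : ℝ => Φ' (y + s • v) v) volume 0 1 :=
    ((hΦ'.comp (by fun_prop)).clm_apply continuous_const).intervalIntegrable 0 1
  simpa using (intervalIntegral.integral_eq_sub_of_hasDerivAt
    (fun s _ => (hΦ _).comp_hasDerivAt s (hline s)) hint).symm

theorem Matrix.continuous_toContinuousLinearMap_mulVecLin {X : Type*} [TopologicalSpace X]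
    {m n : Type*} [Fintype m] [Fintype n] [DecidableEq n] {M : X → Matrix m n ℝ}
    (hM : Continuous M) :
    Continuous fun x => LinearMap.toContinuousLinearMap (M x).mulVecLin :=
  ((LinearMap.toContinuousLinearMap.toLinearMap ∘ₗ
    (Matrix.toLin' : Matrix m n ℝ ≃ₗ[ℝ] _).toLinearMap).continuous_of_finiteDimensional).comp hM

theorem Matrix.intervalIntegral_mulVec {m n : Type*} [Fintype m] [Fintype n]
    {M : ℝ → Matrix m n ℝ} {a b : ℝ}
    (hM : Continuous M) (v : n → ℝ) :
    ∫ s in a..b, M s *ᵥ v = (Matrix.of fun i j => ∫ s in a..b, M s i j) *ᵥ v := by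
  ext i
  rw [← ContinuousLinearMap.proj_apply (R := ℝ) i (∫ s in a..b, M s *ᵥ v),
    ← ContinuousLinearMap.intervalIntegral_comp_comm _
      ((hM.matrix_mulVec continuous_const).intervalIntegrable a b)]
  simp only [ContinuousLinearMap.proj_apply, mulVec, dotProduct, of_apply]
  rw [intervalIntegral.integral_finsetSum (f := fun j s => M s i j * v j) fun j _ =>
    ((hM.matrix_elem i j).mul continuous_const).intervalIntegrable a b]
  simp only [intervalIntegral.integral_mul_const]

theorem koopman_dt_linear_input_general
    {nx nf nu : ℕ}
    (X : Set (Fin nx → ℝ))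
    (U : Set (Fin nu → ℝ))
    (Φ : (Fin nx → ℝ) → (Fin nf → ℝ))
    (DΦ : (Fin nx → ℝ) → Matrix (Fin nf) (Fin nx) ℝ)
    (hΦ : ∀ x : Fin nx → ℝ,
      HasFDerivAt Φ (LinearMap.toContinuousLinearMap (DΦ x).mulVecLin) x)
    (hDΦ : Continuous DΦ)
    (f : (Fin nx → ℝ) → (Fin nx → ℝ))
    (b : Matrix (Fin nx) (Fin nu) ℝ)
    (A : Matrix (Fin nf) (Fin nf) ℝ)
    (hA : ∀ x ∈ X, Φ (f x) = A.mulVec (Φ x)) :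
    ∀ x ∈ X, ∀ u ∈ U,
      Φ (f x + b.mulVec u) =
        A.mulVec (Φ x) +
          ((Matrix.of fun i j =>
            ∫ s in (0:ℝ)..1, DΦ (f x + s • b.mulVec u) i j) * b).mulVec u := by
  intro x hx u _
  have hline := sub_eq_intervalIntegral_fderiv_add_smul hΦ
    (continuous_toContinuousLinearMap_mulVecLin hDΦ) (f x) (b *ᵥ u)
  rw [← mulVec_mulVec, ← intervalIntegral_mulVec (M := fun s => DΦ (f x + s • b *ᵥ u))
    (hDΦ.comp (by fun_prop)), ← hA x hx]
  simpa [sub_eq_iff_eq_add'] using hline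

/-- Exact factorized lifted form of a discrete-time system with
linear input `x_{k+1} = f(x_k) + b u_k` on a convex forward-invariant set `𝕏`
with Koopman-invariant observables: `Φ(f(x) + bu) = A Φ(x) + B(x,u) u` where
`B(x,u) = (∫₀¹ (∂Φ/∂x)(f(x) + λ b u) dλ) b`. -/
theorem koopman_dt_linear_input
    {nx nf nu : ℕ}
    (X : Set (Fin nx → ℝ)) (hX : Convex ℝ X)
    (U : Set (Fin nu → ℝ))
    (Φ : (Fin nx → ℝ) → (Fin nf → ℝ))
    (DΦ : (Fin nx → ℝ) → Matrix (Fin nf) (Fin nx) ℝ)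
    (hΦ : ∀ x : Fin nx → ℝ,
      HasFDerivAt Φ (LinearMap.toContinuousLinearMap (DΦ x).mulVecLin) x)
    (hDΦ : Continuous DΦ)
    (f : (Fin nx → ℝ) → (Fin nx → ℝ))
    (b : Matrix (Fin nx) (Fin nu) ℝ)
    (hf : ∀ x ∈ X, f x ∈ X)
    (hfb : ∀ x ∈ X, ∀ u ∈ U, f x + b.mulVec u ∈ X)
    (A : Matrix (Fin nf) (Fin nf) ℝ)
    (hA : ∀ x ∈ X, Φ (f x) = A.mulVec (Φ x)) :
    ∀ x ∈ X, ∀ u ∈ U,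
      Φ (f x + b.mulVec u) =
        A.mulVec (Φ x) +
          ((Matrix.of fun i j =>
            ∫ s in (0:ℝ)..1, DΦ (f x + s • b.mulVec u) i j) * b).mulVec u :=
  koopman_dt_linear_input_general X U Φ DΦ hΦ hDΦ f b A hA
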